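/- Let (X_t)_{t≥0} be a bounded continuous martingale with values in a compact set K ⊂ ℝⁿ, written via Dambis–Dubins–Schwarz as X_{t,i} = β_{⟨X_i⟩_t} for each coordinate i, where ⟨X_i⟩_t = Σ_j ∫₀ᵗ σ_{i,j}(X_s)² ds for a continuous function σ : K → M_n(ℝ). Then X_t converges almost surely as t → ∞ to a random variable X_∞, and almost surely σ(X_∞) = 0; i.e., X_∞ takes values in the zero set K₀ = {x ∈ K : σ(x) = 0}. -/

import Mathlib

open MeasureTheory Filter
open scoped ENNReal Topology

section AuxStmt2

lemma aux_upcrossings_ge {Ω : Type*} (f : ℕ → Ω → ℝ) (ω : Ω) {a b : ℝ} (hab : a < b)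
    (j : ℕ) (u v : ℕ → ℕ) (huv : ∀ k, k ≤ j → u k < v k) (hvu : ∀ k, k < j → v k < u (k+1))
    (ha : ∀ k, k ≤ j → f (u k) ω < a) (hb : ∀ k, k ≤ j → b < f (v k) ω) :
    ((j + 1 : ℕ) : ℝ≥0∞) ≤ upcrossings a b f ω := by
  have key : ∀ J, J ≤ j → J + 1 ≤ upcrossingsBefore a b f (v J + 1) ω := by
    intro J
    induction J with
    | zero =>
      intro _
      have h0 := upcrossingsBefore_lt_of_exists_upcrossing (f := f) (ω := ω) hab
        (Nat.zero_le (u 0)) (ha 0 (Nat.zero_le j)) (huv 0 (Nat.zero_le j)).le (hb 0 (Nat.zero_le j))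
      rw [upcrossingsBefore_zero] at h0
      exact h0
    | succ J ih =>
      intro hJ
      have h1 : upcrossingsBefore a b f (v J + 1) ω < upcrossingsBefore a b f (v (J+1) + 1) ω :=
        upcrossingsBefore_lt_of_exists_upcrossing (f := f) (ω := ω) hab
          (Nat.succ_le_of_lt (hvu J (Nat.lt_of_succ_le hJ))) (ha (J+1) hJ)
          (huv (J+1) hJ).le (hb (J+1) hJ)
      have h2 := ih (le_of_lt (Nat.lt_of_succ_le hJ))
      omega
  have h3 := key j le_rfl
  calc ((j + 1 : ℕ) : ℝ≥0∞) ≤ (upcrossingsBefore a b f (v j + 1) ω : ℝ≥0∞) := by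
        exact_mod_cast Nat.cast_le.2 h3
    _ ≤ upcrossings a b f ω := le_iSup (fun N => (upcrossingsBefore a b f N ω : ℝ≥0∞)) (v j + 1)

lemma aux_conv {Ω : Type*} (ω : Ω) (F : ℕ → ℕ → Ω → ℝ) (Y : ℝ → ℝ)
    (hF : ∀ m k, F m k ω = Y (k * (1/2 : ℝ)^m))
    (hcont : Continuous Y) (C : ℝ) (hC : ∀ t, |Y t| ≤ C)
    (hU : ∀ a b : ℚ, (a : ℝ) < (b : ℝ) →
      liminf (fun m => upcrossings (a : ℝ) (b : ℝ) (F m) ω) atTop ≠ ⊤) :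
    ∃ l, Tendsto Y atTop (𝓝 l) := by
  have hbddA : IsBoundedUnder (· ≤ ·) atTop Y :=
    isBoundedUnder_of ⟨C, fun t => (abs_le.1 (hC t)).2⟩
  have hbddB : IsBoundedUnder (· ≥ ·) atTop Y :=
    isBoundedUnder_of ⟨-C, fun t => (abs_le.1 (hC t)).1⟩
  rcases eq_or_lt_of_le (liminf_le_limsup hbddA hbddB) with heq | hlt
  · exact ⟨limsup Y atTop, tendsto_of_liminf_eq_limsup heq rfl hbddA hbddB⟩
  exfalso
  obtain ⟨a, hla, haL⟩ := exists_rat_btwn hlt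
  obtain ⟨b, hab, hbL⟩ := exists_rat_btwn haL
  have hab' : (a : ℝ) < (b : ℝ) := hab
  have freq_a : ∃ᶠ t in atTop, Y t < (a : ℝ) :=
    frequently_lt_of_liminf_lt hbddA.isCoboundedUnder_ge hla
  have freq_b : ∃ᶠ t in atTop, (b : ℝ) < Y t :=
    frequently_lt_of_lt_limsup hbddB.isCoboundedUnder_le hbL
  have HA : ∀ T : ℝ, ∃ t, T < t ∧ Y t < (a : ℝ) := by
    intro T
    obtain ⟨t, ht1, ht2⟩ := frequently_atTop'.1 freq_a T
    exact ⟨t, ht1, ht2⟩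
  have HB : ∀ T : ℝ, ∃ t, T < t ∧ (b : ℝ) < Y t := by
    intro T
    obtain ⟨t, ht1, ht2⟩ := frequently_atTop'.1 freq_b T
    exact ⟨t, ht1, ht2⟩
  choose fa hfa1 hfa2 using HA
  choose fb hfb1 hfb2 using HB
  let uv : ℕ → ℝ × ℝ := fun k =>
    Nat.rec (fa 1, fb (fa 1)) (fun _ p => (fa p.2, fb (fa p.2))) k
  set uR : ℕ → ℝ := fun k => (uv k).1 with huR
  set vR : ℕ → ℝ := fun k => (uv k).2 with hvR
  have hveq : ∀ k, vR k = fb (uR k) := by intro k; cases k <;> rfl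
  have hueq : ∀ k, uR (k+1) = fa (vR k) := by intro k; rfl
  have hord1 : ∀ k, uR k < vR k := by intro k; rw [hveq k]; exact hfb1 _
  have hord2 : ∀ k, vR k < uR (k+1) := by intro k; rw [hueq k]; exact hfa1 _
  have hYa : ∀ k, Y (uR k) < (a : ℝ) := by
    intro k; cases k with
    | zero => exact hfa2 1
    | succ k => rw [hueq k]; exact hfa2 _
  have hYb : ∀ k, (b : ℝ) < Y (vR k) := by intro k; rw [hveq k]; exact hfb2 _
  have hpos : ∀ k, 1 < uR k := by
    intro k
    induction k with
    | zero => exact hfa1 1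
    | succ k ih => exact lt_trans (lt_trans ih (hord1 k)) (hord2 k)
  have hopenA : ∀ k, ∃ ε > 0, ∀ x, |x - uR k| < ε → Y x < (a : ℝ) := by
    intro k
    have hopen : IsOpen {x : ℝ | Y x < (a : ℝ)} := isOpen_lt hcont continuous_const
    obtain ⟨ε, hε, hball⟩ := Metric.isOpen_iff.1 hopen (uR k) (hYa k)
    exact ⟨ε, hε, fun x hx => hball (by rwa [Metric.mem_ball, Real.dist_eq])⟩
  have hopenB : ∀ k, ∃ ε > 0, ∀ x, |x - vR k| < ε → (b : ℝ) < Y x := by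
    intro k
    have hopen : IsOpen {x : ℝ | (b : ℝ) < Y x} := isOpen_lt continuous_const hcont
    obtain ⟨ε, hε, hball⟩ := Metric.isOpen_iff.1 hopen (vR k) (hYb k)
    exact ⟨ε, hε, fun x hx => hball (by rwa [Metric.mem_ball, Real.dist_eq])⟩
  choose εA hεA0 hεA using hopenA
  choose εB hεB0 hεB using hopenB
  have hstep : ∀ J : ℕ, (J : ℝ≥0∞) ≤ liminf (fun m => upcrossings (a : ℝ) (b : ℝ) (F m) ω) atTop := by
    intro J
    apply le_liminf_of_le (by isBoundedDefault)
    set e : ℕ → ℝ := fun k =>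
      min (min (εA k) (εB k)) (min ((vR k - uR k)/2) ((uR (k+1) - vR k)/2)) with he
    have he0 : ∀ k, 0 < e k := by
      intro k
      refine lt_min (lt_min (hεA0 k) (hεB0 k)) (lt_min (by linarith [hord1 k]) (by linarith [hord2 k]))
    set D : ℝ := (Finset.range (J+1)).inf' (by simp) e with hD
    have hD0 : 0 < D := by
      rw [hD, Finset.lt_inf'_iff]
      exact fun k _ => he0 k
    have hDle : ∀ k, k ≤ J → D ≤ e k := by
      intro k hk
      exact Finset.inf'_le _ (Finset.mem_range.2 (Nat.lt_succ_of_le hk))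
    have htend : Tendsto (fun m : ℕ => (1/2 : ℝ)^m) atTop (𝓝 0) :=
      tendsto_pow_atTop_nhds_zero_of_lt_one (by norm_num) (by norm_num)
    filter_upwards [htend.eventually_lt_const hD0] with m hm
    set δ : ℝ := (1/2 : ℝ)^m with hδ
    have hδ0 : 0 < δ := by positivity
    set U : ℕ → ℕ := fun k => ⌊uR k / δ⌋₊ with hUdef
    set V : ℕ → ℕ := fun k => ⌊vR k / δ⌋₊ with hVdef
    have hfloor_le : ∀ c : ℝ, 0 ≤ c → (⌊c / δ⌋₊ : ℝ) * δ ≤ c := by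
      intro c hc
      have := Nat.floor_le (div_nonneg hc hδ0.le)
      calc (⌊c / δ⌋₊ : ℝ) * δ ≤ (c / δ) * δ := by nlinarith
        _ = c := div_mul_cancel₀ c hδ0.ne'
    have hfloor_gt : ∀ c : ℝ, 0 ≤ c → c - δ < (⌊c / δ⌋₊ : ℝ) * δ := by
      intro c hc
      have := Nat.lt_floor_add_one (c / δ)
      have h2 : c / δ * δ < ((⌊c / δ⌋₊ : ℝ) + 1) * δ := by nlinarith
      rw [div_mul_cancel₀ c hδ0.ne'] at h2
      nlinarith
    have huR0 : ∀ k, (0:ℝ) ≤ uR k := fun k => by linarith [hpos k]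
    have hvR0 : ∀ k, (0:ℝ) ≤ vR k := fun k => by linarith [hpos k, hord1 k]
    have hUle : ∀ k, (U k : ℝ) * δ ≤ uR k := fun k => hfloor_le _ (huR0 k)
    have hUgt : ∀ k, uR k - δ < (U k : ℝ) * δ := fun k => hfloor_gt _ (huR0 k)
    have hVle : ∀ k, (V k : ℝ) * δ ≤ vR k := fun k => hfloor_le _ (hvR0 k)
    have hVgt : ∀ k, vR k - δ < (V k : ℝ) * δ := fun k => hfloor_gt _ (hvR0 k)
    have main := aux_upcrossings_ge (F m) ω hab' J U V
      (by
        intro k hk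
        have h1 : D ≤ (vR k - uR k)/2 := le_trans (hDle k hk) (le_trans (min_le_right _ _) (min_le_left _ _))
        have : (U k : ℝ) * δ < (V k : ℝ) * δ := by
          have := hUle k; have := hVgt k; linarith
        exact_mod_cast lt_of_mul_lt_mul_right this hδ0.le)
      (by
        intro k hk
        have h1 : D ≤ (uR (k+1) - vR k)/2 := le_trans (hDle k hk.le) (le_trans (min_le_right _ _) (min_le_right _ _))
        have : (V k : ℝ) * δ < (U (k+1) : ℝ) * δ := by
          have := hVle k; have := hUgt (k+1); linarith
        exact_mod_cast lt_of_mul_lt_mul_right this hδ0.le)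
      (by
        intro k hk
        rw [hF m (U k)]
        apply hεA k
        have h1 : D ≤ εA k := le_trans (hDle k hk) (le_trans (min_le_left _ _) (min_le_left _ _))
        have := hUle k; have := hUgt k
        rw [abs_sub_lt_iff]
        constructor <;> linarith)
      (by
        intro k hk
        rw [hF m (V k)]
        apply hεB k
        have h1 : D ≤ εB k := le_trans (hDle k hk) (le_trans (min_le_left _ _) (min_le_right _ _))
        have := hVle k; have := hVgt k
        rw [abs_sub_lt_iff]
        constructor <;> linarith)
    calc (J : ℝ≥0∞) ≤ ((J + 1 : ℕ) : ℝ≥0∞) := by exact_mod_cast Nat.cast_le.2 (Nat.le_succ J)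
      _ ≤ upcrossings (a : ℝ) (b : ℝ) (F m) ω := main
  obtain ⟨J, hJ⟩ := ENNReal.exists_nat_gt (hU a b hab')
  exact absurd (hstep J) (not_le.2 hJ)

lemma aux_coord_le_norm {n : ℕ} (x : EuclideanSpace ℝ (Fin n)) (i : Fin n) : |x i| ≤ ‖x‖ := by
  rw [EuclideanSpace.norm_eq]
  have h1 : |x i| = Real.sqrt (|x i| ^ 2) := by
    rw [Real.sqrt_sq_eq_abs, abs_abs]
  rw [h1]
  apply Real.sqrt_le_sqrt
  have := Finset.single_le_sum (f := fun j => ‖x j‖ ^ 2) (fun j _ => by positivity)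
    (Finset.mem_univ i)
  simpa [Real.norm_eq_abs] using this

lemma aux_coord_mart {n : ℕ} {Ω : Type*} {m0 : MeasurableSpace Ω}
    (P : Measure Ω) [IsProbabilityMeasure P] (ℱ : Filtration ℝ m0)
    {X : ℝ → Ω → EuclideanSpace ℝ (Fin n)} (hmart : Martingale X ℱ P) (i : Fin n) :
    Martingale (fun t ω => X t ω i) ℱ P := by
  refine ⟨fun t => ?_, fun s t hst => ?_⟩
  · exact (EuclideanSpace.proj (𝕜 := ℝ) i).continuous.comp_stronglyMeasurable (hmart.stronglyAdapted t)
  · have h := ae_eq_condExp_of_forall_setIntegral_eq (μ := P) (m := ℱ s) (ℱ.le s)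
      (f := fun ω => X t ω i) (g := fun ω => X s ω i)
      ((EuclideanSpace.proj (𝕜 := ℝ) i).integrable_comp (hmart.integrable t))
      (fun A _ _ => ((EuclideanSpace.proj (𝕜 := ℝ) i).integrable_comp
        (hmart.integrable s)).integrableOn)
      ?_ ?_
    · exact h.symm
    · intro A hA _
      have h1 : ∫ ω in A, X s ω ∂P = ∫ ω in A, X t ω ∂P := by
        rw [← setIntegral_condExp (ℱ.le s) (hmart.integrable t) hA]
        exact setIntegral_congr_ae (ℱ.le s A hA)
          ((hmart.condExp_ae_eq hst).mono fun ω hω _ => hω.symm)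
      have h2 := (EuclideanSpace.proj (𝕜 := ℝ) i).integral_comp_comm
        (μ := P.restrict A) (hmart.integrable s).integrableOn
      have h3 := (EuclideanSpace.proj (𝕜 := ℝ) i).integral_comp_comm
        (μ := P.restrict A) (hmart.integrable t).integrableOn
      calc ∫ ω in A, X s ω i ∂P
          = EuclideanSpace.proj (𝕜 := ℝ) i (∫ ω in A, X s ω ∂P) := h2
        _ = EuclideanSpace.proj (𝕜 := ℝ) i (∫ ω in A, X t ω ∂P) := by rw [h1]
        _ = ∫ ω in A, X t ω i ∂P := h3.symm
    · exact StronglyMeasurable.aestronglyMeasurable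
        ((EuclideanSpace.proj (𝕜 := ℝ) i).continuous.comp_stronglyMeasurable (hmart.stronglyAdapted s))

lemma aux_dds_coord {n : ℕ} (g : Fin n → ℝ → ℝ)
    (hgc : ∀ j, Continuous (g j)) (hgnn : ∀ j s, 0 ≤ g j s)
    (b : ℝ → ℝ)
    (hbdiv : ¬ ∃ l, Tendsto b atTop (𝓝 l))
    (Yi : ℝ → ℝ) (li : ℝ) (hYtend : Tendsto Yi atTop (𝓝 li))
    (hDDS : ∀ t, 0 ≤ t → Yi t = b (∑ j, ∫ s in (0:ℝ)..t, g j s))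
    (c : Fin n → ℝ) (hglim : ∀ j, Tendsto (g j) atTop (𝓝 (c j))) :
    ∀ j, c j = 0 := by
  have hint : ∀ (j : Fin n) (a b' : ℝ), IntervalIntegrable (g j) MeasureTheory.volume a b' :=
    fun j a b' => (hgc j).intervalIntegrable a b'
  have hAcont : Continuous (fun t => ∑ j, ∫ s in (0:ℝ)..t, g j s) :=
    continuous_finset_sum _ (fun j _ =>
      intervalIntegral.continuous_primitive (fun a b' => hint j a b') 0)
  have hAmono : Monotone (fun t => ∑ j, ∫ s in (0:ℝ)..t, g j s) := by
    intro s t hst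
    apply Finset.sum_le_sum
    intro j _
    have hadd := intervalIntegral.integral_add_adjacent_intervals (hint j 0 s) (hint j s t)
    have hnn : 0 ≤ ∫ u in s..t, g j u :=
      intervalIntegral.integral_nonneg hst (fun u _ => hgnn j u)
    linarith
  have hAbdd : ∃ B, ∀ t, (∑ j, ∫ s in (0:ℝ)..t, g j s) ≤ B := by
    by_contra hub
    push_neg at hub
    refine hbdiv ⟨li, ?_⟩
    rw [Metric.tendsto_atTop]
    intro ε hε
    obtain ⟨T₀, hT₀⟩ := Metric.tendsto_atTop.1 hYtend ε hε
    refine ⟨(∑ j, ∫ s in (0:ℝ)..(max T₀ 0), g j s), fun s hs => ?_⟩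
    obtain ⟨t0, ht0⟩ := hub s
    have h2 : s ≤ ∑ j, ∫ u in (0:ℝ)..(max t0 (max T₀ 0)), g j u :=
      le_trans ht0.le (hAmono (le_max_left _ _))
    obtain ⟨t, htmem, htA⟩ := intermediate_value_Icc (le_max_right t0 (max T₀ 0))
      hAcont.continuousOn ⟨hs, h2⟩
    have htpos : (0:ℝ) ≤ t := le_trans (le_max_right T₀ 0) htmem.1
    have hY := hDDS t htpos
    have htA' : (∑ j, ∫ u in (0:ℝ)..t, g j u) = s := htA
    have hbs : b s = Yi t := by rw [hY, htA']
    rw [hbs]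
    exact hT₀ t (le_trans (le_max_left _ _) htmem.1)
  obtain ⟨B, hB⟩ := hAbdd
  intro j
  by_contra hc
  have hcnn : 0 ≤ c j := ge_of_tendsto (hglim j)
    (Eventually.of_forall (fun s => hgnn j s))
  have hc2 : 0 < c j := lt_of_le_of_ne hcnn (Ne.symm hc)
  obtain ⟨T₁, hT₁⟩ := eventually_atTop.1 ((hglim j).eventually (eventually_gt_nhds (half_lt_self hc2)))
  set T₀ : ℝ := max T₁ 0 with hT₀def
  set t : ℝ := T₀ + 2 * (|B| + 1) / c j with htdef
  have htT₀ : T₀ ≤ t := by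
    rw [htdef]
    have : 0 < 2 * (|B| + 1) / c j := by positivity
    linarith
  have ht0 : (0:ℝ) ≤ t := le_trans (le_max_right T₁ 0) htT₀
  have hmain : (c j / 2) * (t - T₀) ≤ ∫ s in (0:ℝ)..t, g j s := by
    have hadd := intervalIntegral.integral_add_adjacent_intervals (hint j 0 T₀) (hint j T₀ t)
    have h1 : 0 ≤ ∫ s in (0:ℝ)..T₀, g j s :=
      intervalIntegral.integral_nonneg (le_max_right T₁ 0) (fun u _ => hgnn j u)
    have h2 : (c j / 2) * (t - T₀) ≤ ∫ s in T₀..t, g j s := by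
      have hmono := intervalIntegral.integral_mono_on (μ := MeasureTheory.volume) htT₀
        (intervalIntegrable_const (c := c j / 2)) (hint j T₀ t)
        (fun x hx => le_of_lt (hT₁ x (le_trans (le_max_left T₁ 0) hx.1)))
      rw [intervalIntegral.integral_const] at hmono
      rw [mul_comm]
      simpa [smul_eq_mul] using hmono
    linarith
  have hsingle : (∫ s in (0:ℝ)..t, g j s) ≤ ∑ j', ∫ s in (0:ℝ)..t, g j' s := by
    apply Finset.single_le_sum (f := fun j' => ∫ s in (0:ℝ)..t, g j' s) _ (Finset.mem_univ j)
    intro j' _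
    exact intervalIntegral.integral_nonneg ht0 (fun u _ => hgnn j' u)
  have hBt := hB t
  have harith : (c j / 2) * (t - T₀) = |B| + 1 := by
    rw [htdef]
    field_simp
    ring
  have hcontr : |B| + 1 ≤ B := by
    rw [← harith]
    linarith
  have := le_abs_self B
  linarith

end AuxStmt2

/-- A bounded continuous martingale in a compact `K`, each coordinate of which is a
time-changed Brownian motion `X_{t,i} = β_i(⟨X_i⟩_t)` with
`⟨X_i⟩_t = Σ_j ∫₀ᵗ σ_{i,j}(X_s)² ds`, converges a.s. to a limit `X_∞` and a.s.
`σ(X_∞) = 0`, i.e. `X_∞` takes values in `K₀ = {x ∈ K : σ(x) = 0}`. -/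
theorem stmt_2 {n : ℕ} {Ω : Type*} {m0 : MeasurableSpace Ω}
    (P : Measure Ω) [IsProbabilityMeasure P] (ℱ : Filtration ℝ m0)
    (K : Set (EuclideanSpace ℝ (Fin n))) (hKcompact : IsCompact K)
    (σm : EuclideanSpace ℝ (Fin n) → Matrix (Fin n) (Fin n) ℝ)
    (hσcont : Continuous σm)
    (X : ℝ → Ω → EuclideanSpace ℝ (Fin n))
    (hmart : Martingale X ℱ P)
    (hXcont : ∀ ω, Continuous fun t => X t ω)
    (hXK : ∀ t ω, X t ω ∈ K)
    -- Dambis–Dubins–Schwarz representation: `β i` is a Brownian motion and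
    -- `X_{t,i} = β_i (⟨X_i⟩_t)`.
    (β : Fin n → ℝ → Ω → ℝ)
    (hβcont : ∀ i ω, Continuous fun s => β i s ω)
    -- a Brownian path almost surely does not converge at infinity
    (hβdiv : ∀ᵐ ω ∂P, ∀ i, ¬ ∃ l : ℝ, Tendsto (fun s => β i s ω) atTop (nhds l))
    (hDDS : ∀ i t ω, 0 ≤ t →
      X t ω i = β i (∑ j, ∫ s in (0:ℝ)..t, (σm (X s ω) i j) ^ 2) ω) :
    ∃ Xinf : Ω → EuclideanSpace ℝ (Fin n),
      (∀ᵐ ω ∂P, Tendsto (fun t => X t ω) atTop (nhds (Xinf ω))) ∧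
      (∀ᵐ ω ∂P, σm (Xinf ω) = 0) ∧
      (∀ᵐ ω ∂P, Xinf ω ∈ {x ∈ K | σm x = 0}) := by
  -- boundedness
  obtain ⟨C, hCK⟩ := hKcompact.isBounded.subset_closedBall 0
  have hC : ∀ t ω', ‖X t ω'‖ ≤ C := by
    intro t ω'
    have := hCK (hXK t ω')
    rwa [Metric.mem_closedBall, dist_zero_right] at this
  have hCc : ∀ (i : Fin n) t ω', |X t ω' i| ≤ C :=
    fun i t ω' => le_trans (aux_coord_le_norm _ i) (hC t ω')
  -- coordinate martingales
  have Ymart : ∀ i : Fin n, Martingale (fun t ω' => X t ω' i) ℱ P :=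
    fun i => aux_coord_mart P ℱ hmart i
  -- dyadic grid filtrations and processes
  set 𝒢 : ℕ → Filtration ℕ m0 := fun m =>
    { seq := fun k => ℱ ((k : ℝ) * (1/2 : ℝ)^m)
      mono' := fun k k' hkk => ℱ.mono
        (mul_le_mul_of_nonneg_right (Nat.cast_le.2 hkk) (by positivity))
      le' := fun k => ℱ.le _ } with h𝒢
  set F : Fin n → ℕ → ℕ → Ω → ℝ :=
    fun i m k ω' => X ((k : ℝ) * (1/2 : ℝ)^m) ω' i with hFdef
  have hsub : ∀ (i : Fin n) (m : ℕ), Submartingale (F i m) (𝒢 m) P := by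
    intro i m
    refine Martingale.submartingale ⟨fun k => (Ymart i).stronglyAdapted _, fun k k' hkk => ?_⟩
    exact (Ymart i).condExp_ae_eq
      (mul_le_mul_of_nonneg_right (Nat.cast_le.2 hkk) (by positivity))
  -- Doob upcrossing estimate, uniform in m
  have hDoob : ∀ (i : Fin n) (m : ℕ) (a b : ℚ), (a:ℝ) < (b:ℝ) →
      (∫⁻ ω', upcrossings (a:ℝ) (b:ℝ) (F i m) ω' ∂P) ≤
        ENNReal.ofReal (C + |(a:ℝ)|) / ENNReal.ofReal ((b:ℝ) - (a:ℝ)) := by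
    intro i m a b hab
    have hd := (hsub i m).mul_lintegral_upcrossings_le_lintegral_pos_part (a:ℝ) (b:ℝ)
    have hR : (⨆ N, ∫⁻ ω', ENNReal.ofReal ((F i m N ω' - (a:ℝ))⁺) ∂P) ≤
        ENNReal.ofReal (C + |(a:ℝ)|) := by
      refine iSup_le fun N => ?_
      have hpt : ∀ ω', ENNReal.ofReal ((F i m N ω' - (a:ℝ))⁺) ≤
          ENNReal.ofReal (C + |(a:ℝ)|) := by
        intro ω'
        apply ENNReal.ofReal_le_ofReal
        have h1 := hCc i ((N : ℝ) * (1/2 : ℝ)^m) ω'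
        have h2 : F i m N ω' - (a:ℝ) ≤ C + |(a:ℝ)| := by
          have := abs_le.1 h1
          have := neg_abs_le (a:ℝ)
          simp only [hFdef]
          linarith [(abs_le.1 h1).2, neg_abs_le (a:ℝ)]
        have h3 : (0:ℝ) ≤ C + |(a:ℝ)| := by
          have := abs_nonneg (F i m N ω')
          have := le_trans (abs_nonneg _) (hCc i ((N : ℝ) * (1/2 : ℝ)^m) ω')
          positivity
        calc (F i m N ω' - (a:ℝ))⁺ = (F i m N ω' - (a:ℝ)) ⊔ 0 := rfl
          _ ≤ C + |(a:ℝ)| := sup_le h2 h3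
      calc ∫⁻ ω', ENNReal.ofReal ((F i m N ω' - (a:ℝ))⁺) ∂P
          ≤ ∫⁻ _, ENNReal.ofReal (C + |(a:ℝ)|) ∂P := lintegral_mono hpt
        _ = ENNReal.ofReal (C + |(a:ℝ)|) := by simp [measure_univ]
    have hba : ENNReal.ofReal ((b:ℝ) - (a:ℝ)) ≠ 0 :=
      (ENNReal.ofReal_pos.2 (sub_pos.2 hab)).ne'
    rw [ENNReal.le_div_iff_mul_le (Or.inl hba) (Or.inl ENNReal.ofReal_ne_top)]
    calc (∫⁻ ω', upcrossings (a:ℝ) (b:ℝ) (F i m) ω' ∂P) * ENNReal.ofReal ((b:ℝ) - (a:ℝ))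
        = ENNReal.ofReal ((b:ℝ) - (a:ℝ)) * ∫⁻ ω', upcrossings (a:ℝ) (b:ℝ) (F i m) ω' ∂P :=
          mul_comm _ _
      _ ≤ _ := le_trans hd hR
  -- Fatou: a.s. finiteness of liminf of upcrossings
  have hae : ∀ (i : Fin n) (a b : ℚ), (a:ℝ) < (b:ℝ) →
      ∀ᵐ ω' ∂P, liminf (fun m => upcrossings (a:ℝ) (b:ℝ) (F i m) ω') atTop ≠ ⊤ := by
    intro i a b hab
    have hmeas : ∀ m, Measurable (fun ω' => upcrossings (a:ℝ) (b:ℝ) (F i m) ω') :=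
      fun m => (hsub i m).stronglyAdapted.measurable_upcrossings hab
    have hfatou := lintegral_liminf_le hmeas (μ := P) (u := atTop)
    have hlim : liminf (fun m => ∫⁻ ω', upcrossings (a:ℝ) (b:ℝ) (F i m) ω' ∂P) atTop ≤
        ENNReal.ofReal (C + |(a:ℝ)|) / ENNReal.ofReal ((b:ℝ) - (a:ℝ)) :=
      liminf_le_of_frequently_le' (Frequently.of_forall fun m => hDoob i m a b hab)
    have hfin : (∫⁻ ω', liminf (fun m => upcrossings (a:ℝ) (b:ℝ) (F i m) ω') atTop ∂P) ≠ ⊤ := by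
      refine ne_of_lt (lt_of_le_of_lt (le_trans hfatou hlim) ?_)
      exact ENNReal.div_lt_top ENNReal.ofReal_ne_top
        ((ENNReal.ofReal_pos.2 (sub_pos.2 hab)).ne')
    have := ae_lt_top (Measurable.liminf hmeas) hfin
    exact this.mono fun ω' h => h.ne
  have haeAll : ∀ᵐ ω' ∂P, ∀ (i : Fin n) (a b : ℚ), (a:ℝ) < (b:ℝ) →
      liminf (fun m => upcrossings (a:ℝ) (b:ℝ) (F i m) ω') atTop ≠ ⊤ := by
    rw [ae_all_iff]
    intro i
    rw [ae_all_iff]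
    intro a
    rw [ae_all_iff]
    intro b
    by_cases hab : (a:ℝ) < (b:ℝ)
    · exact (hae i a b hab).mono fun ω' h _ => h
    · exact Eventually.of_forall fun ω' h => absurd h hab
  -- a.s. convergence of every coordinate, hence of X
  have hconv : ∀ᵐ ω ∂P, ∃ v, Tendsto (fun t => X t ω) atTop (𝓝 v) := by
    filter_upwards [haeAll] with ω hω
    have hcoord : ∀ i : Fin n, ∃ l, Tendsto (fun t => X t ω i) atTop (𝓝 l) := by
      intro i
      refine aux_conv ω (fun m => F i m) (fun t => X t ω i) (fun m k => rfl) ?_ C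
        (fun t => hCc i t ω) (fun a b hab => hω i a b hab)
      exact (EuclideanSpace.proj (𝕜 := ℝ) i).continuous.comp (hXcont ω)
    choose l hl using hcoord
    refine ⟨(EuclideanSpace.equiv (Fin n) ℝ).symm l, ?_⟩
    have h : Tendsto (fun t => (EuclideanSpace.equiv (Fin n) ℝ) (X t ω)) atTop (𝓝 l) :=
      tendsto_pi_nhds.2 fun i => hl i
    have h2 := ((EuclideanSpace.equiv (Fin n) ℝ).symm.continuous.tendsto l).comp h
    exact h2.congr (fun t => ContinuousLinearEquiv.symm_apply_apply _ _)
  classical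
  refine ⟨fun ω => if h : ∃ v, Tendsto (fun t => X t ω) atTop (𝓝 v) then h.choose else 0, ?_, ?_, ?_⟩
  · filter_upwards [hconv] with ω hω
    rw [dif_pos hω]
    exact hω.choose_spec
  · filter_upwards [hconv, hβdiv] with ω hω hdiv
    rw [dif_pos hω]
    set v := hω.choose with hvdef
    have htd : Tendsto (fun t => X t ω) atTop (𝓝 v) := hω.choose_spec
    refine Matrix.ext fun i j => ?_
    have hz := aux_dds_coord (fun j' s => (σm (X s ω) i j') ^ 2)
      (fun j' => ((hσcont.comp (hXcont ω)).matrix_elem i j').pow 2)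
      (fun j' s => sq_nonneg _)
      (fun s => β i s ω) (hdiv i)
      (fun t => X t ω i) (v i)
      (((EuclideanSpace.proj (𝕜 := ℝ) i).continuous.tendsto v).comp htd)
      (fun t ht => hDDS i t ω ht)
      (fun j' => (σm v i j') ^ 2)
      (fun j' => ((((continuous_pow 2).comp (hσcont.matrix_elem i j'))).tendsto v).comp htd)
      j
    have : σm v i j = 0 := by
      nlinarith [hz, sq_nonneg (σm v i j)]
    simpa using this
  · filter_upwards [hconv, hβdiv] with ω hω hdiv
    rw [dif_pos hω]
    constructor
    · exact hKcompact.isClosed.mem_of_tendsto hω.choose_spec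
        (Eventually.of_forall fun t => hXK t ω)
    · -- repeat the matrix-zero argument
      set v := hω.choose with hvdef
      have htd : Tendsto (fun t => X t ω) atTop (𝓝 v) := hω.choose_spec
      refine Matrix.ext fun i j => ?_
      have hz := aux_dds_coord (fun j' s => (σm (X s ω) i j') ^ 2)
        (fun j' => ((hσcont.comp (hXcont ω)).matrix_elem i j').pow 2)
        (fun j' s => sq_nonneg _)
        (fun s => β i s ω) (hdiv i)
        (fun t => X t ω i) (v i)
        (((EuclideanSpace.proj (𝕜 := ℝ) i).continuous.tendsto v).comp htd)
        (fun t ht => hDDS i t ω ht)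
        (fun j' => (σm v i j') ^ 2)
        (fun j' => ((((continuous_pow 2).comp (hσcont.matrix_elem i j'))).tendsto v).comp htd)
        j
      have : σm v i j = 0 := by
        nlinarith [hz, sq_nonneg (σm v i j)]
      simpa using this
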